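/- For every n ≥ 0, every subset I ⊆ [n], and every E ⊆ I such that i ∈ E and i+1 ∈ E for some integer i, the entry A'_n(I, ([n] \ I) ∪ E) of the matrix A'_n = U_n A_n V_n equals 0. -/
import Mathlib


open Finset Polynomial
open scoped Classical

namespace AR

/-- `binVal I = r_n(I) - 1 = Σ_{i ∈ I} 2^(i-1)`. -/
def binVal (I : Finset ℕ) : ℕ := ∑ i ∈ I, 2 ^ (i - 1)

lemma binVal_Icc (m : ℕ) : binVal (Finset.Icc 1 m) = 2 ^ m - 1 := by
  induction m with
  | zero => simp [binVal]
  | succ k ih =>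
      rw [binVal, Finset.sum_Icc_succ_top (by omega)]
      rw [binVal] at ih
      rw [ih]
      have h1 : 1 ≤ 2 ^ k := Nat.one_le_two_pow
      simp only [Nat.add_sub_cancel, pow_succ]
      omega

lemma binVal_lt {n : ℕ} {I : Finset ℕ} (h : I ⊆ Finset.Icc 1 n) : binVal I < 2 ^ n := by
  have h1 : binVal I ≤ binVal (Finset.Icc 1 n) :=
    Finset.sum_le_sum_of_subset h
  have h2 := binVal_Icc n
  have h3 : 1 ≤ 2 ^ n := Nat.one_le_two_pow
  omega

/-- The row/column index (zero-based, i.e. `r_n(I) - 1`) corresponding to a subset `I ⊆ [n]`. -/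
def idx (n : ℕ) (I : Finset ℕ) (h : I ⊆ Finset.Icc 1 n) : Fin (2 ^ n) :=
  ⟨binVal I, binVal_lt h⟩

def blockEquiv (n : ℕ) : Fin (2 ^ n) ⊕ Fin (2 ^ n) ≃ Fin (2 ^ (n + 1)) :=
  finSumFinEquiv.trans (finCongr (by rw [pow_succ, mul_two]))

/-- The pair of Adin–Roichman matrices `(A_n, B_n)`, defined recursively. -/
def ABpair : (n : ℕ) → Matrix (Fin (2 ^ n)) (Fin (2 ^ n)) ℤ × Matrix (Fin (2 ^ n)) (Fin (2 ^ n)) ℤ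
  | 0 => (Matrix.of fun _ _ => 1, Matrix.of fun _ _ => 1)
  | n + 1 =>
      let p := ABpair n
      ((Matrix.reindex (blockEquiv n) (blockEquiv n)) (Matrix.fromBlocks p.1 p.1 p.1 (-p.2)),
       (Matrix.reindex (blockEquiv n) (blockEquiv n)) (Matrix.fromBlocks p.1 p.1 0 (-p.2)))

def A (n : ℕ) : Matrix (Fin (2 ^ n)) (Fin (2 ^ n)) ℤ := (ABpair n).1

def B (n : ℕ) : Matrix (Fin (2 ^ n)) (Fin (2 ^ n)) ℤ := (ABpair n).2

/-- `R` is a (nonempty) integer interval. -/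
def IsInterval (R : Finset ℕ) : Prop := ∃ a b : ℕ, R = Finset.Icc a b

/-- `R` is a run of `I`: a maximal nonempty interval contained in `I`. -/
def IsRun (I R : Finset ℕ) : Prop :=
  R.Nonempty ∧ IsInterval R ∧ R ⊆ I ∧
    ∀ S : Finset ℕ, IsInterval S → S ⊆ I → R ⊆ S → S = R

/-- `R` is a prefix of `S` : `min R = min S` and `R ⊆ S`. -/
def IsPrefixOf (R S : Finset ℕ) : Prop := R.min = S.min ∧ R ⊆ S

/-- `I ≫ J` : every run of `I ∩ J` is a prefix of a run of `I`. -/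
def Gg (I J : Finset ℕ) : Prop :=
  ∀ R : Finset ℕ, IsRun (I ∩ J) R → ∃ S : Finset ℕ, IsRun I S ∧ IsPrefixOf R S

/-- The set of runs of `I`. -/
noncomputable def runs (I : Finset ℕ) : Finset (Finset ℕ) :=
  I.powerset.filter (fun R => IsRun I R)

/-- `π(I)`: the product of (size + 1) over the runs of `I`. -/
noncomputable def piFun (I : Finset ℕ) : ℕ := ∏ R ∈ runs I, (R.card + 1)

/-- `π'_n(I)`: the product of (size + 1) over the runs of `I` not containing `n`. -/
noncomputable def piFun' (n : ℕ) (I : Finset ℕ) : ℕ :=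
  ∏ R ∈ (runs I).filter (fun R => n ∉ R), (R.card + 1)

/-- The subset of `[n]` encoded by a zero-based index `i : Fin (2^n)` (binary digits). -/
def decode (n : ℕ) (i : Fin (2 ^ n)) : Finset ℕ :=
  (Finset.Icc 1 n).filter (fun k => Nat.testBit i.val (k - 1))

/-- The matrix `U_n`, with `U_n(I,J) = 1` if `I ⊇ J` and `0` otherwise. -/
def U (n : ℕ) : Matrix (Fin (2 ^ n)) (Fin (2 ^ n)) ℤ :=
  Matrix.of fun i j => if decode n j ⊆ decode n i then 1 else 0

/-- The matrix `V_n = U_n⁻¹`, with `V_n(I,J) = (-1)^{|I \ J|}` if `I ⊇ J` and `0` otherwise. -/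
def V (n : ℕ) : Matrix (Fin (2 ^ n)) (Fin (2 ^ n)) ℤ :=
  Matrix.of fun i j =>
    if decode n j ⊆ decode n i then (-1) ^ ((decode n i) \ (decode n j)).card else 0

def A' (n : ℕ) : Matrix (Fin (2 ^ n)) (Fin (2 ^ n)) ℤ := U n * A n * V n

def B' (n : ℕ) : Matrix (Fin (2 ^ n)) (Fin (2 ^ n)) ℤ := U n * B n * V n

/-- `E ⪯ I` : `E ⊆ I`, `E` contains no minimal element of a run of `I`,
and `E` contains no two consecutive integers. -/
def SubPrec (E I : Finset ℕ) : Prop :=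
  E ⊆ I ∧ (∀ R : Finset ℕ, (h : IsRun I R) → R.min' h.1 ∉ E) ∧
    ∀ i : ℕ, ¬ (i ∈ E ∧ i + 1 ∈ E)

/-- `I ⇝ J` : `J = ([n] \ I) ∪ E` for some `E ⪯ I`. -/
def Step (n : ℕ) (I J : Finset ℕ) : Prop :=
  ∃ E : Finset ℕ, SubPrec E I ∧ J = (Finset.Icc 1 n \ I) ∪ E

/-- `π_μ` for a composition `μ` of `n`. -/
def piComp {n : ℕ} (μ : Composition n) : ℕ := (μ.blocks.map (· + 1)).prod

/-- `π'_μ` for a composition `μ` of `n`. -/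
def piComp' {n : ℕ} (μ : Composition n) : ℕ := (μ.blocks.dropLast.map (· + 1)).prod

/-- The Thue–Morse sequence: `thueMorse m = s₂(m) % 2`. -/
def thueMorse (m : ℕ) : ℕ := (Nat.digits 2 m).sum % 2

lemma blockEquiv_inl_val {n : ℕ} (i : Fin (2 ^ n)) :
    (blockEquiv n (Sum.inl i) : ℕ) = i.val := by
  simp [blockEquiv, finSumFinEquiv_apply_left]

lemma blockEquiv_inr_val {n : ℕ} (i : Fin (2 ^ n)) :
    (blockEquiv n (Sum.inr i) : ℕ) = 2 ^ n + i.val := by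
  simp [blockEquiv, finSumFinEquiv_apply_right, Fin.natAdd]

lemma succ_notMem_decode {n : ℕ} (i : Fin (2 ^ n)) : n + 1 ∉ decode n i := by
  intro h
  simp only [decode, Finset.mem_filter, Finset.mem_Icc] at h
  omega

lemma decode_inl {n : ℕ} (i : Fin (2 ^ n)) :
    decode (n + 1) (blockEquiv n (Sum.inl i)) = decode n i := by
  ext k
  simp only [decode, Finset.mem_filter, Finset.mem_Icc, blockEquiv_inl_val]
  constructor
  · rintro ⟨⟨h1, h2⟩, h3⟩
    refine ⟨⟨h1, ?_⟩, h3⟩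
    rcases Nat.lt_or_ge k (n+1) with h | h
    · omega
    · have hk : k = n + 1 := by omega
      rw [hk] at h3
      simp [Nat.testBit_lt_two_pow i.isLt] at h3
  · rintro ⟨⟨h1, h2⟩, h3⟩
    exact ⟨⟨h1, by omega⟩, h3⟩

lemma decode_inr {n : ℕ} (i : Fin (2 ^ n)) :
    decode (n + 1) (blockEquiv n (Sum.inr i)) = insert (n + 1) (decode n i) := by
  ext k
  simp only [decode, Finset.mem_filter, Finset.mem_Icc, blockEquiv_inr_val,
    Finset.mem_insert]
  constructor
  · rintro ⟨⟨h1, h2⟩, h3⟩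
    rcases eq_or_ne k (n+1) with hk | hk
    · exact Or.inl hk
    · refine Or.inr ⟨⟨h1, by omega⟩, ?_⟩
      rwa [Nat.testBit_two_pow_add_gt (by omega)] at h3
  · rintro (hk | ⟨⟨h1, h2⟩, h3⟩)
    · subst hk
      refine ⟨⟨by omega, le_refl _⟩, ?_⟩
      simp only [Nat.add_sub_cancel]
      rw [Nat.testBit_two_pow_add_eq, Nat.testBit_lt_two_pow i.isLt]
      rfl
    · refine ⟨⟨h1, by omega⟩, ?_⟩
      rwa [Nat.testBit_two_pow_add_gt (by omega)]
lemma U_succ (n : ℕ) :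
    U (n + 1) = (Matrix.fromBlocks (U n) 0 (U n) (U n)).submatrix
      (blockEquiv n).symm (blockEquiv n).symm := by
  ext i j
  obtain ⟨i, rfl⟩ := (blockEquiv n).surjective i
  obtain ⟨j, rfl⟩ := (blockEquiv n).surjective j
  simp only [Matrix.submatrix_apply, Equiv.symm_apply_apply]
  rcases i with i | i <;> rcases j with j | j <;>
    simp only [U, Matrix.of_apply, Matrix.fromBlocks_apply₁₁, Matrix.fromBlocks_apply₁₂,
      Matrix.fromBlocks_apply₂₁, Matrix.fromBlocks_apply₂₂, decode_inl, decode_inr,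
      Matrix.zero_apply]
  · rw [if_neg]
    intro h
    exact succ_notMem_decode i (h (Finset.mem_insert_self _ _))
  · congr 1
    exact propext (Finset.subset_insert_iff_of_notMem (succ_notMem_decode j))
  · congr 1
    exact propext (Finset.insert_subset_insert_iff (succ_notMem_decode j))

lemma V_succ (n : ℕ) :
    V (n + 1) = (Matrix.fromBlocks (V n) 0 (-(V n)) (V n)).submatrix
      (blockEquiv n).symm (blockEquiv n).symm := by
  ext i j
  obtain ⟨i, rfl⟩ := (blockEquiv n).surjective i
  obtain ⟨j, rfl⟩ := (blockEquiv n).surjective j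
  simp only [Matrix.submatrix_apply, Equiv.symm_apply_apply]
  rcases i with i | i <;> rcases j with j | j <;>
    simp only [V, Matrix.of_apply, Matrix.fromBlocks_apply₁₁, Matrix.fromBlocks_apply₁₂,
      Matrix.fromBlocks_apply₂₁, Matrix.fromBlocks_apply₂₂, decode_inl, decode_inr,
      Matrix.zero_apply, Matrix.neg_apply]
  · rw [if_neg]
    intro h
    exact succ_notMem_decode i (h (Finset.mem_insert_self _ _))
  · by_cases h : decode n j ⊆ decode n i
    · rw [if_pos (h.trans (Finset.subset_insert _ _)), if_pos h]
      rw [Finset.insert_sdiff_of_notMem _ (succ_notMem_decode j)]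
      rw [Finset.card_insert_of_notMem (fun hc => succ_notMem_decode i (Finset.mem_sdiff.mp hc).1)]
      rw [pow_succ]
      ring
    · rw [if_neg, if_neg h]
      · ring
      · intro hc
        exact h fun x hx => by
          have := hc hx
          rcases Finset.mem_insert.mp this with h1 | h1
          · subst h1; exact absurd hx (succ_notMem_decode j)
          · exact h1
  · by_cases h : decode n j ⊆ decode n i
    · rw [if_pos, if_pos h]
      · congr 2
        rw [Finset.insert_sdiff_insert]
        rw [Finset.sdiff_insert_of_notMem]
        intro hc
        exact succ_notMem_decode i hc
      · exact Finset.insert_subset_insert _ h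
    · rw [if_neg, if_neg h]
      intro hc
      exact h ((Finset.insert_subset_insert_iff (succ_notMem_decode j)).mp hc)
lemma A_succ (n : ℕ) :
    A (n + 1) = (Matrix.fromBlocks (A n) (A n) (A n) (-(B n))).submatrix
      (blockEquiv n).symm (blockEquiv n).symm := by
  rw [A, ABpair]
  simp [Matrix.reindex_apply, A, B]

lemma B_succ (n : ℕ) :
    B (n + 1) = (Matrix.fromBlocks (A n) (A n) 0 (-(B n))).submatrix
      (blockEquiv n).symm (blockEquiv n).symm := by
  rw [B, ABpair]
  simp [Matrix.reindex_apply, A, B]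

lemma A'_succ (n : ℕ) :
    A' (n + 1) = (Matrix.fromBlocks 0 (A' n) (A' n + B' n) (A' n - B' n)).submatrix
      (blockEquiv n).symm (blockEquiv n).symm := by
  rw [A', U_succ, A_succ, V_succ,
    Matrix.submatrix_mul_equiv _ _ _ (blockEquiv n).symm _,
    Matrix.submatrix_mul_equiv _ _ _ (blockEquiv n).symm _]
  refine congrArg (fun M => Matrix.submatrix M ⇑(blockEquiv n).symm ⇑(blockEquiv n).symm) ?_
  rw [Matrix.fromBlocks_multiply, Matrix.fromBlocks_multiply, Matrix.fromBlocks_inj]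
  refine ⟨by noncomm_ring, ?_, ?_, ?_⟩ <;> simp only [A', B'] <;> noncomm_ring

lemma B'_succ (n : ℕ) :
    B' (n + 1) = (Matrix.fromBlocks 0 (A' n) (B' n) (A' n - B' n)).submatrix
      (blockEquiv n).symm (blockEquiv n).symm := by
  rw [B', U_succ, B_succ, V_succ,
    Matrix.submatrix_mul_equiv _ _ _ (blockEquiv n).symm _,
    Matrix.submatrix_mul_equiv _ _ _ (blockEquiv n).symm _]
  refine congrArg (fun M => Matrix.submatrix M ⇑(blockEquiv n).symm ⇑(blockEquiv n).symm) ?_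
  rw [Matrix.fromBlocks_multiply, Matrix.fromBlocks_multiply, Matrix.fromBlocks_inj]
  refine ⟨by noncomm_ring, ?_, ?_, ?_⟩ <;> simp only [A', B'] <;> noncomm_ring
lemma idx_congr {n : ℕ} {S T : Finset ℕ} (h : S = T) (hS : S ⊆ Finset.Icc 1 n)
    (hT : T ⊆ Finset.Icc 1 n) : idx n S hS = idx n T hT := by
  subst h; rfl

lemma subset_Icc_of_not_mem {n : ℕ} {I : Finset ℕ} (hI : I ⊆ Finset.Icc 1 (n + 1))
    (h : n + 1 ∉ I) : I ⊆ Finset.Icc 1 n := by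
  intro x hx
  have := hI hx
  simp only [Finset.mem_Icc] at this ⊢
  refine ⟨this.1, ?_⟩
  rcases Nat.lt_or_ge x (n+1) with h1 | h1
  · omega
  · have : x = n + 1 := by omega
    subst this; exact absurd hx h

lemma erase_subset_Icc {n : ℕ} {I : Finset ℕ} (hI : I ⊆ Finset.Icc 1 (n + 1)) :
    I.erase (n + 1) ⊆ Finset.Icc 1 n :=
  subset_Icc_of_not_mem ((Finset.erase_subset _ _).trans hI) (Finset.notMem_erase _ _)

lemma idx_inl {n : ℕ} {I : Finset ℕ} (hI : I ⊆ Finset.Icc 1 (n + 1)) (h : n + 1 ∉ I) :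
    idx (n + 1) I hI = blockEquiv n (Sum.inl (idx n I (subset_Icc_of_not_mem hI h))) := by
  apply Fin.ext
  rw [blockEquiv_inl_val]
  rfl

lemma idx_inr {n : ℕ} {I : Finset ℕ} (hI : I ⊆ Finset.Icc 1 (n + 1)) (h : n + 1 ∈ I) :
    idx (n + 1) I hI = blockEquiv n (Sum.inr (idx n (I.erase (n + 1)) (erase_subset_Icc hI))) := by
  apply Fin.ext
  rw [blockEquiv_inr_val]
  show binVal I = 2 ^ n + binVal (I.erase (n + 1))
  rw [binVal, binVal, ← Finset.add_sum_erase _ _ h]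
  simp

lemma submatrix_block_apply {n : ℕ} (M : Matrix (Fin (2^n) ⊕ Fin (2^n)) (Fin (2^n) ⊕ Fin (2^n)) ℤ)
    (x y : Fin (2^n) ⊕ Fin (2^n)) :
    (M.submatrix ⇑(blockEquiv n).symm ⇑(blockEquiv n).symm) (blockEquiv n x) (blockEquiv n y)
      = M x y := by
  simp [Matrix.submatrix_apply]
lemma A'_eq_B'_of_mem {n : ℕ} {I J : Finset ℕ} (hI : I ⊆ Finset.Icc 1 (n + 1))
    (hJ : J ⊆ Finset.Icc 1 (n + 1)) (hnJ : n + 1 ∈ J) :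
    A' (n + 1) (idx (n + 1) I hI) (idx (n + 1) J hJ)
      = B' (n + 1) (idx (n + 1) I hI) (idx (n + 1) J hJ) := by
  rw [A'_succ, B'_succ, idx_inr hJ hnJ]
  by_cases h : n + 1 ∈ I
  · rw [idx_inr hI h, submatrix_block_apply, submatrix_block_apply,
      Matrix.fromBlocks_apply₂₂, Matrix.fromBlocks_apply₂₂]
  · rw [idx_inl hI h, submatrix_block_apply, submatrix_block_apply,
      Matrix.fromBlocks_apply₁₂, Matrix.fromBlocks_apply₁₂]

lemma eraseJ {n : ℕ} {I E : Finset ℕ} (h1 : n + 1 ∈ I) :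
    ((Finset.Icc 1 (n + 1) \ I) ∪ E).erase (n + 1)
      = (Finset.Icc 1 n \ I.erase (n + 1)) ∪ E.erase (n + 1) := by
  ext x
  by_cases hx : x = n + 1 <;> by_cases hxI : x ∈ I <;> by_cases hxE : x ∈ E <;>
    simp [hx, hxI, hxE, h1, Finset.mem_erase, Finset.mem_union, Finset.mem_sdiff,
      Finset.mem_Icc] <;> omega

lemma J_of_mem {n : ℕ} {I E : Finset ℕ} (h1 : n + 1 ∈ I) (h2 : n + 1 ∉ E) :
    (Finset.Icc 1 (n + 1) \ I) ∪ E
      = (Finset.Icc 1 n \ I.erase (n + 1)) ∪ E := by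
  ext x
  by_cases hx : x = n + 1 <;> by_cases hxI : x ∈ I <;> by_cases hxE : x ∈ E <;>
    simp [hx, hxI, hxE, h1, h2, Finset.mem_erase, Finset.mem_union, Finset.mem_sdiff,
      Finset.mem_Icc] <;> omega

lemma eraseJ_of_notMem {n : ℕ} {I E : Finset ℕ} (h1 : n + 1 ∉ I)
    (hI : I ⊆ Finset.Icc 1 n) (h2 : n + 1 ∉ E) :
    ((Finset.Icc 1 (n + 1) \ I) ∪ E).erase (n + 1)
      = (Finset.Icc 1 n \ I) ∪ E := by
  ext x
  by_cases hx : x = n + 1 <;> by_cases hxI : x ∈ I <;> by_cases hxE : x ∈ E <;>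
    simp [hx, hxI, hxE, h1, h2, Finset.mem_erase, Finset.mem_union, Finset.mem_sdiff,
      Finset.mem_Icc] <;> omega

lemma mainAB : ∀ (n : ℕ) (I E : Finset ℕ) (hI : I ⊆ Finset.Icc 1 n) (hE : E ⊆ I)
    (_hcons : ∃ i : ℕ, i ∈ E ∧ i + 1 ∈ E)
    (hJ : (Finset.Icc 1 n \ I) ∪ E ⊆ Finset.Icc 1 n),
    A' n (idx n I hI) (idx n ((Finset.Icc 1 n \ I) ∪ E) hJ) = 0 ∧
    B' n (idx n I hI) (idx n ((Finset.Icc 1 n \ I) ∪ E) hJ) = 0 := by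
  intro n
  induction n with
  | zero =>
      rintro I E hI hE ⟨i, hi, _⟩ hJ
      have := hI (hE hi)
      simp [Finset.mem_Icc] at this
  | succ n ih =>
      rintro I E hI hE ⟨i, hiE, hi1E⟩ hJ
      have hi1I : i + 1 ∈ I := hE hi1E
      have hile : i + 1 ≤ n + 1 := (Finset.mem_Icc.mp (hI hi1I)).2
      have hige : 1 ≤ i := (Finset.mem_Icc.mp (hI (hE hiE))).1
      by_cases h1 : n + 1 ∈ I
      · by_cases h2 : n + 1 ∈ E
        · -- bottom-right block
          have hnJ : n + 1 ∈ (Finset.Icc 1 (n+1) \ I) ∪ E := Finset.mem_union_right _ h2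
          rw [A'_succ, B'_succ, idx_inr hI h1, idx_inr hJ hnJ,
            submatrix_block_apply, submatrix_block_apply,
            Matrix.fromBlocks_apply₂₂, Matrix.fromBlocks_apply₂₂,
            Matrix.sub_apply]
          have hcol := idx_congr (eraseJ (E := E) h1) (erase_subset_Icc hJ)
            (Finset.union_subset (Finset.sdiff_subset) ((Finset.erase_subset_erase _ hE).trans
              (erase_subset_Icc hI)))
          by_cases hi : i + 1 = n + 1
          · -- the pair is (n, n+1): use A' = B'
            have hin : i = n := by omega
            have hnE' : n ∈ ((Finset.Icc 1 (n+1) \ I) ∪ E).erase (n + 1) :=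
              Finset.mem_erase.mpr ⟨by omega, Finset.mem_union_right _ (hin ▸ hiE)⟩
            have hn1 : 1 ≤ n := by omega
            obtain ⟨m, rfl⟩ : ∃ m, n = m + 1 := ⟨n - 1, by omega⟩
            have := A'_eq_B'_of_mem (erase_subset_Icc hI) (erase_subset_Icc hJ) hnE'
            rw [this]
            constructor <;> ring
          · -- the pair survives in E.erase (n+1)
            have hE' : E.erase (n + 1) ⊆ I.erase (n + 1) := Finset.erase_subset_erase _ hE
            have hcons' : ∃ j : ℕ, j ∈ E.erase (n+1) ∧ j + 1 ∈ E.erase (n+1) :=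
              ⟨i, Finset.mem_erase.mpr ⟨by omega, hiE⟩, Finset.mem_erase.mpr ⟨by omega, hi1E⟩⟩
            obtain ⟨hA, hB⟩ := ih (I.erase (n+1)) (E.erase (n+1)) (erase_subset_Icc hI) hE'
              hcons' (Finset.union_subset Finset.sdiff_subset (hE'.trans (erase_subset_Icc hI)))
            rw [hcol, hA, hB]
            constructor <;> ring
        · -- bottom-left block
          have hnJ : n + 1 ∉ (Finset.Icc 1 (n+1) \ I) ∪ E := by
            simp [Finset.mem_union, Finset.mem_sdiff, h1, h2]
          rw [A'_succ, B'_succ, idx_inr hI h1, idx_inl hJ hnJ,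
            submatrix_block_apply, submatrix_block_apply,
            Matrix.fromBlocks_apply₂₁, Matrix.fromBlocks_apply₂₁, Matrix.add_apply]
          have hE' : E ⊆ I.erase (n + 1) := Finset.subset_erase.mpr ⟨hE, h2⟩
          have hcol := idx_congr (J_of_mem (E := E) h1 h2) (subset_Icc_of_not_mem hJ hnJ)
            (Finset.union_subset Finset.sdiff_subset (hE'.trans (erase_subset_Icc hI)))
          obtain ⟨hA, hB⟩ := ih (I.erase (n+1)) E (erase_subset_Icc hI) hE'
            ⟨i, hiE, hi1E⟩ (Finset.union_subset Finset.sdiff_subset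
              (hE'.trans (erase_subset_Icc hI)))
          rw [hcol, hA, hB]
          constructor <;> ring
      · -- top-right block
        have h2 : n + 1 ∉ E := fun hc => h1 (hE hc)
        have hI' : I ⊆ Finset.Icc 1 n := subset_Icc_of_not_mem hI h1
        have hnJ : n + 1 ∈ (Finset.Icc 1 (n+1) \ I) ∪ E :=
          Finset.mem_union_left _ (Finset.mem_sdiff.mpr
            ⟨Finset.mem_Icc.mpr ⟨by omega, le_refl _⟩, h1⟩)
        rw [A'_succ, B'_succ, idx_inl hI h1, idx_inr hJ hnJ,
          submatrix_block_apply, submatrix_block_apply,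
          Matrix.fromBlocks_apply₁₂, Matrix.fromBlocks_apply₁₂]
        have hcol := idx_congr (eraseJ_of_notMem h1 hI' h2) (erase_subset_Icc hJ)
          (Finset.union_subset Finset.sdiff_subset (hE.trans hI'))
        obtain ⟨hA, _⟩ := ih I E hI' hE ⟨i, hiE, hi1E⟩
          (Finset.union_subset Finset.sdiff_subset (hE.trans hI'))
        rw [hcol, hA]
        exact ⟨rfl, rfl⟩

theorem stmt9 (n : ℕ) (I E : Finset ℕ) (hI : I ⊆ Finset.Icc 1 n) (hE : E ⊆ I)
    (hcons : ∃ i : ℕ, i ∈ E ∧ i + 1 ∈ E) :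
    A' n (idx n I hI)
      (idx n ((Finset.Icc 1 n \ I) ∪ E)
        (Finset.union_subset Finset.sdiff_subset (hE.trans hI))) = 0 := by
  exact (mainAB n I E hI hE hcons _).1

end AR
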